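/- arXiv:2502.18286 — 4 statements merged into one kernel-verified Lean document; each statement's English description precedes it below -/
import Mathlib

section
/- For ν > 0 and ω > 0, define q₁ = aνω(ν²(a²−b²)+ω²)/Δ, q₂ = bνω(ν²(b²−a²)+ω²)/Δ, q₃ = (ν⁴(a²−b²)² + ν²ω²(a²+b²))/Δ, q₄ = 2abν²ω²/Δ, where Δ = ν⁴(a²−b²)² + 2ν²ω²(a²+b²) + ω⁴. Then the pair α₋(t) = q₁cos ωt + q₂cos(ωt+φ) + q₃sin ωt + q₄sin(ωt+φ), α₊(t) = q₁cos(ωt+φ) + q₂cos ωt + q₃sin(ωt+φ) + q₄sin ωt solves α̇₋ = ν(a(α₋ − sin ωt)+b(α₊ − sin(ωt+φ))), α̇₊ = ν(b(α₋ − sin ωt)+a(α₊ − sin(ωt+φ))) for all t, provided Δ ≠ 0. -/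
/-!
Both sides of each equation are combinations of `cos ωt`, `cos (ωt + φ)`, `sin ωt`, `sin (ωt + φ)`,
so it suffices to match the four coefficients. Exchanging `ωt` and `ωt + φ` turns `α₋` into `α₊`
and the first equation into the second, so both give the same 4 × 4 linear system for
`q₁, …, q₄`; its determinant is `Δ` and its solution is the stated one.
-/

open Real

theorem hasDerivAt_harmonic (ω φ c₁ c₂ s₁ s₂ t : ℝ) :
    HasDerivAt (fun t => c₁ * cos (ω * t) + c₂ * cos (ω * t + φ)
        + s₁ * sin (ω * t) + s₂ * sin (ω * t + φ))
      (ω * (-c₁ * sin (ω * t) - c₂ * sin (ω * t + φ)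
        + s₁ * cos (ω * t) + s₂ * cos (ω * t + φ))) t := by
  have hωt : HasDerivAt (fun t : ℝ => ω * t) ω t := by
    simpa using (hasDerivAt_id t).const_mul ω
  have hωtφ : HasDerivAt (fun t : ℝ => ω * t + φ) ω t := hωt.add_const φ
  refine ((((hωt.cos.const_mul c₁).add (hωtφ.cos.const_mul c₂)).add
    (hωt.sin.const_mul s₁)).add (hωtφ.sin.const_mul s₂)).congr_deriv ?_
  ring

theorem shape_system_of_coeff_eqs (ν ω a b φ q₁ q₂ q₃ q₄ : ℝ)
    (hcos : ω * q₃ = ν * (a * q₁ + b * q₂))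
    (hcosφ : ω * q₄ = ν * (a * q₂ + b * q₁))
    (hsin : -(ω * q₁) = ν * (a * q₃ + b * q₄ - a))
    (hsinφ : -(ω * q₂) = ν * (a * q₄ + b * q₃ - b))
    (αm αp : ℝ → ℝ)
    (hαm : αm = fun t => q₁ * cos (ω * t) + q₂ * cos (ω * t + φ)
        + q₃ * sin (ω * t) + q₄ * sin (ω * t + φ))
    (hαp : αp = fun t => q₁ * cos (ω * t + φ) + q₂ * cos (ω * t)
        + q₃ * sin (ω * t + φ) + q₄ * sin (ω * t)) (t : ℝ) :
    HasDerivAt αm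
        (ν * (a * (αm t - sin (ω * t)) + b * (αp t - sin (ω * t + φ)))) t ∧
      HasDerivAt αp
        (ν * (b * (αm t - sin (ω * t)) + a * (αp t - sin (ω * t + φ)))) t := by
  subst hαm
  obtain rfl : αp = fun t => q₂ * cos (ω * t) + q₁ * cos (ω * t + φ)
      + q₄ * sin (ω * t) + q₃ * sin (ω * t + φ) := hαp.trans (by funext t; ring)
  constructor
  · convert hasDerivAt_harmonic ω φ q₁ q₂ q₃ q₄ t using 1
    linear_combination -(cos (ω * t) * hcos + cos (ω * t + φ) * hcosφ
      + sin (ω * t) * hsin + sin (ω * t + φ) * hsinφ)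
  · convert hasDerivAt_harmonic ω φ q₂ q₁ q₄ q₃ t using 1
    linear_combination -(cos (ω * t) * hcosφ + cos (ω * t + φ) * hcos
      + sin (ω * t) * hsinφ + sin (ω * t + φ) * hsin)

theorem shape_coeff_eqs (ν ω a b Δ : ℝ)
    (hΔdef : Δ = ν^4 * (a^2 - b^2)^2 + 2 * ν^2 * ω^2 * (a^2 + b^2) + ω^4) (hΔ : Δ ≠ 0)
    (q₁ q₂ q₃ q₄ : ℝ)
    (hq₁ : q₁ = a * ν * ω * (ν^2 * (a^2 - b^2) + ω^2) / Δ)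
    (hq₂ : q₂ = b * ν * ω * (ν^2 * (b^2 - a^2) + ω^2) / Δ)
    (hq₃ : q₃ = (ν^4 * (a^2 - b^2)^2 + ν^2 * ω^2 * (a^2 + b^2)) / Δ)
    (hq₄ : q₄ = 2 * a * b * ν^2 * ω^2 / Δ) :
    ω * q₃ = ν * (a * q₁ + b * q₂) ∧ ω * q₄ = ν * (a * q₂ + b * q₁) ∧
      -(ω * q₁) = ν * (a * q₃ + b * q₄ - a) ∧ -(ω * q₂) = ν * (a * q₄ + b * q₃ - b) := by
  subst hq₁ hq₂ hq₃ hq₄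
  refine ⟨?_, ?_, ?_, ?_⟩ <;> field_simp <;> subst hΔdef <;> ring

theorem stmt3_general (ν ω a b φ : ℝ)
    (Δ : ℝ) (hΔdef : Δ = ν^4 * (a^2 - b^2)^2 + 2 * ν^2 * ω^2 * (a^2 + b^2) + ω^4)
    (hΔ : Δ ≠ 0)
    (q₁ q₂ q₃ q₄ : ℝ)
    (hq₁ : q₁ = a * ν * ω * (ν^2 * (a^2 - b^2) + ω^2) / Δ)
    (hq₂ : q₂ = b * ν * ω * (ν^2 * (b^2 - a^2) + ω^2) / Δ)
    (hq₃ : q₃ = (ν^4 * (a^2 - b^2)^2 + ν^2 * ω^2 * (a^2 + b^2)) / Δ)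
    (hq₄ : q₄ = 2 * a * b * ν^2 * ω^2 / Δ)
    (αm αp : ℝ → ℝ)
    (hαm : αm = fun t => q₁ * cos (ω * t) + q₂ * cos (ω * t + φ)
        + q₃ * sin (ω * t) + q₄ * sin (ω * t + φ))
    (hαp : αp = fun t => q₁ * cos (ω * t + φ) + q₂ * cos (ω * t)
        + q₃ * sin (ω * t + φ) + q₄ * sin (ω * t)) :
    ∀ t, HasDerivAt αm
        (ν * (a * (αm t - sin (ω * t)) + b * (αp t - sin (ω * t + φ)))) t ∧
      HasDerivAt αp
        (ν * (b * (αm t - sin (ω * t)) + a * (αp t - sin (ω * t + φ)))) t := by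
  obtain ⟨hcos, hcosφ, hsin, hsinφ⟩ :=
    shape_coeff_eqs ν ω a b Δ hΔdef hΔ q₁ q₂ q₃ q₄ hq₁ hq₂ hq₃ hq₄
  exact shape_system_of_coeff_eqs ν ω a b φ q₁ q₂ q₃ q₄ hcos hcosφ hsin hsinφ αm αp hαm hαp

/-- the explicit harmonic pair solves the forced linear shape system. -/
theorem stmt3 (ν ω a b φ : ℝ) (hν : 0 < ν) (hω : 0 < ω)
    (Δ : ℝ) (hΔdef : Δ = ν^4 * (a^2 - b^2)^2 + 2 * ν^2 * ω^2 * (a^2 + b^2) + ω^4)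
    (hΔ : Δ ≠ 0)
    (q₁ q₂ q₃ q₄ : ℝ)
    (hq₁ : q₁ = a * ν * ω * (ν^2 * (a^2 - b^2) + ω^2) / Δ)
    (hq₂ : q₂ = b * ν * ω * (ν^2 * (b^2 - a^2) + ω^2) / Δ)
    (hq₃ : q₃ = (ν^4 * (a^2 - b^2)^2 + ν^2 * ω^2 * (a^2 + b^2)) / Δ)
    (hq₄ : q₄ = 2 * a * b * ν^2 * ω^2 / Δ)
    (αm αp : ℝ → ℝ)
    (hαm : αm = fun t => q₁ * cos (ω * t) + q₂ * cos (ω * t + φ)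
        + q₃ * sin (ω * t) + q₄ * sin (ω * t + φ))
    (hαp : αp = fun t => q₁ * cos (ω * t + φ) + q₂ * cos (ω * t)
        + q₃ * sin (ω * t + φ) + q₄ * sin (ω * t)) :
    ∀ t, HasDerivAt αm
        (ν * (a * (αm t - sin (ω * t)) + b * (αp t - sin (ω * t + φ)))) t ∧
      HasDerivAt αp
        (ν * (b * (αm t - sin (ω * t)) + a * (αp t - sin (ω * t + φ)))) t :=
  stmt3_general ν ω a b φ Δ hΔdef hΔ q₁ q₂ q₃ q₄ hq₁ hq₂ hq₃ hq₄ αm αp hαm hαp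
end

section
/- For real constants a+b < 0, c, ν > 0, ω > 0, φ, the function θ(t) = (2cν/(ν²(a+b)²+ω²))·(ν(a+b)sin(ωt+φ/2) + ω cos(ωt+φ/2))·cos(φ/2) satisfies θ̇(t) = cν[(α₋(t) − sin ωt) + (α₊(t) − sin(ωt+φ))] for the periodic steady-state shape solution α₋, α₊ of the linearized system, i.e., θ is the periodic steady-state orientation response. -/
open Real

/-!
Write `k = ν (a + b) < 0`. Adding the two shape equations shows that the total deviation
`S = (α₋ - sin ωt) + (α₊ - sin (ωt + φ))` solves the scalar linear equation
`S' = k S - ω (cos ωt + cos (ωt + φ))`, and `S` is `2π/ω`-periodic. Also `θ' = cν F` for an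
explicit harmonic `F` solving the same equation. The difference of two periodic solutions
solves `g' = k g`, so it is `g 0 · exp (k t)`; since `k ≠ 0` this is periodic only when
`g = 0`. Hence `S = F`.
-/

theorem eq_zero_of_periodic_of_hasDerivAt_mul_self {g : ℝ → ℝ} {k T : ℝ} (hk : k ≠ 0)
    (hT : T ≠ 0) (hg : ∀ t, HasDerivAt g (k * g t) t) (hper : Function.Periodic g T) :
    g = 0 := by
  have hderiv : ∀ t, HasDerivAt (fun s => g s * exp (-(k * s))) 0 t := fun t => by
    refine ((hg t).mul ((hasDerivAt_id t).const_mul k).neg.exp).congr_deriv ?_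
    simp only [id, mul_one]
    ring
  have hconst : ∀ t, g t * exp (-(k * t)) = g 0 := fun t => by
    simpa using is_const_of_deriv_eq_zero (fun s => (hderiv s).differentiableAt)
      (fun s => (hderiv s).deriv) t 0
  have hexp : exp (-(k * T)) ≠ 1 := by
    rw [Ne, exp_eq_one_iff]
    simp [hk, hT]
  have hg0 : g 0 = 0 := by
    by_contra hne
    have h := hconst T
    rw [hper.eq] at h
    exact hexp (mul_left_cancel₀ hne (h.trans (mul_one _).symm))
  funext t
  simpa [hg0, exp_ne_zero] using hconst t

theorem eq_of_periodic_of_hasDerivAt_mul_add {x y h : ℝ → ℝ} {k T : ℝ} (hk : k ≠ 0)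
    (hT : T ≠ 0) (hx : ∀ t, HasDerivAt x (k * x t + h t) t)
    (hy : ∀ t, HasDerivAt y (k * y t + h t) t) (hxT : Function.Periodic x T)
    (hyT : Function.Periodic y T) : x = y :=
  sub_eq_zero.mp <| eq_zero_of_periodic_of_hasDerivAt_mul_self hk hT
    (fun t => ((hx t).sub (hy t)).congr_deriv (by simp only [Pi.sub_apply]; ring)) (hxT.sub hyT)

section Harmonic

variable (ω φ : ℝ)

theorem hasDerivAt_sin_mul_add (t : ℝ) :
    HasDerivAt (fun s => sin (ω * s + φ)) (ω * cos (ω * t + φ)) t := by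
  simpa [mul_comm] using (((hasDerivAt_id t).const_mul ω).add_const φ).sin

theorem hasDerivAt_cos_mul_add (t : ℝ) :
    HasDerivAt (fun s => cos (ω * s + φ)) (-(ω * sin (ω * t + φ))) t := by
  simpa [mul_comm] using (((hasDerivAt_id t).const_mul ω).add_const φ).cos

theorem periodic_sin_mul_add :
    Function.Periodic (fun t => sin (ω * t + φ)) (2 * π / ω) := by
  simpa [div_eq_inv_mul] using (sin_periodic.add_const φ).const_mul ω

theorem periodic_cos_mul_add :
    Function.Periodic (fun t => cos (ω * t + φ)) (2 * π / ω) := by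
  simpa [div_eq_inv_mul] using (cos_periodic.add_const φ).const_mul ω

/-- The `2π/ω`-periodic solution of `x' = k x - ω (cos ωt + cos (ωt + φ))`. -/
noncomputable def steadyResponse (k : ℝ) (t : ℝ) : ℝ :=
  2 * ω / (k ^ 2 + ω ^ 2) * (k * cos (ω * t + φ / 2) - ω * sin (ω * t + φ / 2)) * cos (φ / 2)

variable {ω}

theorem hasDerivAt_steadyResponse (hω : ω ≠ 0) (k t : ℝ) :
    HasDerivAt (steadyResponse ω φ k)
      (k * steadyResponse ω φ k t + -(ω * (cos (ω * t) + cos (ω * t + φ)))) t := by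
  have hD : k ^ 2 + ω ^ 2 ≠ 0 := by positivity
  have hcos : cos (ω * t) + cos (ω * t + φ) = 2 * cos (ω * t + φ / 2) * cos (φ / 2) := by
    rw [cos_add_cos, ← cos_neg ((ω * t - (ω * t + φ)) / 2)]
    ring_nf
  refine ((((hasDerivAt_cos_mul_add ω (φ / 2) t).const_mul k).sub
    ((hasDerivAt_sin_mul_add ω (φ / 2) t).const_mul ω)).const_mul _).mul_const _ |>.congr_deriv ?_
  rw [hcos, steadyResponse]
  field_simp
  ring

theorem periodic_steadyResponse (k : ℝ) :
    Function.Periodic (steadyResponse ω φ k) (2 * π / ω) := fun t => by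
  simp only [steadyResponse, periodic_sin_mul_add ω (φ / 2) t,
    periodic_cos_mul_add ω (φ / 2) t]

end Harmonic

/-- the explicit harmonic θ is the periodic steady-state orientation
response: it satisfies θ̇ = cν[(α₋ − sin ωt) + (α₊ − sin(ωt+φ))] whenever α₋, α₊
is the periodic steady-state solution of the linearized shape system. -/
theorem stmt4 (ν a b c ω φ : ℝ) (hν : 0 < ν) (hω : 0 < ω) (hab : a + b < 0)
    (αm αp : ℝ → ℝ)
    (hαm : ∀ t, HasDerivAt αm
        (ν * (a * (αm t - sin (ω * t)) + b * (αp t - sin (ω * t + φ)))) t)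
    (hαp : ∀ t, HasDerivAt αp
        (ν * (b * (αm t - sin (ω * t)) + a * (αp t - sin (ω * t + φ)))) t)
    (hper : Function.Periodic αm (2 * π / ω) ∧ Function.Periodic αp (2 * π / ω))
    (θ : ℝ → ℝ)
    (hθ : θ = fun t => (2 * c * ν / (ν^2 * (a + b)^2 + ω^2)) *
        (ν * (a + b) * sin (ω * t + φ / 2) + ω * cos (ω * t + φ / 2)) * cos (φ / 2)) :
    ∀ t, HasDerivAt θ
      (c * ν * ((αm t - sin (ω * t)) + (αp t - sin (ω * t + φ)))) t := by
  obtain ⟨hpm, hpp⟩ := hper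
  have hk : ν * (a + b) ≠ 0 := (mul_neg_of_pos_of_neg hν hab).ne
  have hT : 2 * π / ω ≠ 0 := by positivity
  have hsin : ∀ t, HasDerivAt (fun s => sin (ω * s)) (ω * cos (ω * t)) t := fun t => by
    simpa using hasDerivAt_sin_mul_add ω 0 t
  have hdeviation : ∀ t, HasDerivAt (fun s => (αm s - sin (ω * s)) + (αp s - sin (ω * s + φ)))
      (ν * (a + b) * ((αm t - sin (ω * t)) + (αp t - sin (ω * t + φ))) +
        -(ω * (cos (ω * t) + cos (ω * t + φ)))) t := fun t =>
    (((hαm t).sub (hsin t)).add ((hαp t).sub (hasDerivAt_sin_mul_add ω φ t))).congr_deriv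
      (by ring)
  have hperiodic : Function.Periodic
      (fun s => (αm s - sin (ω * s)) + (αp s - sin (ω * s + φ))) (2 * π / ω) :=
    (hpm.sub (by simpa using periodic_sin_mul_add ω 0)).add (hpp.sub (periodic_sin_mul_add ω φ))
  have hsteady := eq_of_periodic_of_hasDerivAt_mul_add hk hT hdeviation
    (hasDerivAt_steadyResponse φ hω.ne' _) hperiodic (periodic_steadyResponse φ _)
  intro t
  rw [congrFun hsteady t, hθ]
  refine ((((hasDerivAt_sin_mul_add ω (φ / 2) t).const_mul _).add
    ((hasDerivAt_cos_mul_add ω (φ / 2) t).const_mul ω)).const_mul _).mul_const _ |>.congr_deriv ?_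
  rw [steadyResponse]
  ring
end

section
/- Fix ν > 0 with ν < 1. The average speed v̄(ω) = (ω/2π)·60π(1−ν)ν(972ν²+5ω²)/((36ν²+ω²)(26244ν²+25ω²)) over ω ∈ (0,∞) attains its maximum at ω_opt = 18√(3/5)·ν, where v̄(ω_opt) = (15√15/512)(1−ν). -/
open Real

/-- the average speed attains its maximum over ω ∈ (0,∞) at
ω_opt = 18√(3/5)·ν, with value (15√15/512)(1−ν). -/
theorem stmt7 (ν : ℝ) (hν : 0 < ν) (hν1 : ν < 1)
    (v : ℝ → ℝ)
    (hv : v = fun ω => (ω / (2 * π)) * 60 * π * (1 - ν) * ν * (972 * ν^2 + 5 * ω^2) /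
        ((36 * ν^2 + ω^2) * (26244 * ν^2 + 25 * ω^2)))
    (ωopt : ℝ) (hωopt : ωopt = 18 * Real.sqrt (3 / 5) * ν) :
    (∀ ω ∈ Set.Ioi (0 : ℝ), v ω ≤ v ωopt) ∧
      v ωopt = (15 * Real.sqrt 15 / 512) * (1 - ν) := by
  have hπ : (π : ℝ) ≠ 0 := pi_ne_zero
  set s : ℝ := Real.sqrt 15 with hs
  have hs2 : s ^ 2 = 15 := Real.sq_sqrt (by norm_num)
  have hspos : 0 < s := Real.sqrt_pos.mpr (by norm_num)
  have h35 : Real.sqrt (3 / 5) = s / 5 := by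
    rw [show (3 / 5 : ℝ) = (s / 5) ^ 2 by linear_combination (-1 / 25) * hs2,
      Real.sqrt_sq (by positivity)]
  have hw : ωopt = 18 * (s / 5) * ν := by rw [hωopt, h35]
  have hνne : ν ≠ 0 := ne_of_gt hν
  -- value at the optimum
  have hval : v ωopt = (15 * s / 512) * (1 - ν) := by
    rw [hv, hw]
    show (18 * (s / 5) * ν / (2 * π)) * 60 * π * (1 - ν) * ν *
        (972 * ν^2 + 5 * (18 * (s / 5) * ν)^2) /
        ((36 * ν^2 + (18 * (s / 5) * ν)^2) * (26244 * ν^2 + 25 * (18 * (s / 5) * ν)^2)) =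
        (15 * s / 512) * (1 - ν)
    have hd1 : (36 * ν^2 + (18 * (s / 5) * ν)^2) = 1152 / 5 * ν ^ 2 := by
      linear_combination (324 / 25 * ν ^ 2) * hs2
    have hd2 : (26244 * ν^2 + 25 * (18 * (s / 5) * ν)^2) = 31104 * ν ^ 2 := by
      linear_combination (324 * ν ^ 2) * hs2
    have hn : (972 * ν^2 + 5 * (18 * (s / 5) * ν)^2) = 1944 * ν ^ 2 := by
      linear_combination (324 / 5 * ν ^ 2) * hs2
    rw [hd1, hd2, hn]
    field_simp
    ring
  refine ⟨?_, by rw [hval]⟩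
  intro ω hω
  rw [Set.mem_Ioi] at hω
  rw [hval, hv]
  show (ω / (2 * π)) * 60 * π * (1 - ν) * ν * (972 * ν^2 + 5 * ω^2) /
      ((36 * ν^2 + ω^2) * (26244 * ν^2 + 25 * ω^2)) ≤ (15 * s / 512) * (1 - ν)
  have hD : (0 : ℝ) < (36 * ν^2 + ω^2) * (26244 * ν^2 + 25 * ω^2) := by positivity
  rw [div_le_iff₀ hD]
  have hQ : 0 ≤ 75 * ω^2 - 484 * s * ω * ν + 14580 * ν^2 := by
    have hsn : s ^ 2 * ν ^ 2 = 15 * ν ^ 2 := by rw [hs2]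
    nlinarith [sq_nonneg (150 * ω - 484 * s * ν)]
  have hkey : 0 ≤ s * ((36 * ν^2 + ω^2) * (26244 * ν^2 + 25 * ω^2))
      - 1024 * ω * ν * (972 * ν^2 + 5 * ω^2) := by
    have hid : s * ((36 * ν^2 + ω^2) * (26244 * ν^2 + 25 * ω^2))
        - 1024 * ω * ν * (972 * ν^2 + 5 * ω^2)
        = (s / 75) * ((75 * ω^2 - 484 * s * ω * ν + 14580 * ν^2) * (5 * ω - 18 * s * ν)^2) := by
      linear_combination (52272 / 25 * s ^ 2 * ω * ν ^ 3 - 7428 / 5 * s * ω ^ 2 * ν ^ 2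
        - 314928 / 5 * s * ν ^ 4 + 1024 / 3 * ω ^ 3 * ν + 331776 / 5 * ω * ν ^ 3) * hs2
    rw [hid]
    positivity
  have hsimp : (ω / (2 * π)) * 60 * π = 30 * ω := by field_simp; ring
  rw [hsimp]
  have h1ν : (0 : ℝ) ≤ 15 * (1 - ν) / 512 := by linarith
  nlinarith [mul_nonneg h1ν hkey]
end

section
/- Let L(θ₀, ν) be the 5×5 bracket matrix of the elastic microswimmer (as defined with entries depending on sin θ₀, cos θ₀, and polynomial expressions in ν). Then det L(θ₀, ν) is independent of θ₀. -/
/-!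
The angle θ₀ enters only the first two columns of `L θ₀`, and these are the first two columns
of `L 0` rotated by θ₀. Rotating two arguments of an alternating form multiplies its value by
cos² θ₀ + sin² θ₀ = 1.
-/

open Real Matrix Function

namespace AlternatingMap

variable {R M N ι : Type*} [CommRing R] [AddCommGroup M] [Module R M] [AddCommGroup N] [Module R N]
  [DecidableEq ι]

theorem map_update_rotate (f : M [⋀^ι]→ₗ[R] N) (v : ι → M) {i j : ι} (hij : i ≠ j) (c s : R) :
    f (update (update v i (c • v i - s • v j)) j (s • v i + c • v j)) = (c ^ 2 + s ^ 2) • f v := by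
  have hvj : update (update v i (c • v i - s • v j)) j (v j) = update v i (c • v i - s • v j) := by
    rw [update_eq_self_iff, update_of_ne hij.symm]
  have hswap : f (update (update v i (v j)) j (v i)) = -f v := by
    rw [← Equiv.comp_swap_eq_update, Equiv.swap_comm, f.map_swap v hij]
  rw [f.map_update_add, f.map_update_smul, f.map_update_smul, hvj, update_comm hij,
    f.map_update_sub, f.map_update_smul, f.map_update_smul, update_comm hij.symm,
    update_comm hij.symm, f.map_update_sub, f.map_update_smul, f.map_update_smul, update_eq_self,
    f.map_update_self v hij.symm, hswap, f.map_update_self v hij]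
  module

end AlternatingMap

theorem Matrix.det_updateCol_rotate {n R : Type*} [Fintype n] [DecidableEq n] [CommRing R]
    (A : Matrix n n R) {i j : n} (hij : i ≠ j) (c s : R) :
    ((A.updateCol i (c • Aᵀ i - s • Aᵀ j)).updateCol j (s • Aᵀ i + c • Aᵀ j)).det =
      (c ^ 2 + s ^ 2) * A.det := by
  rw [← det_transpose, ← updateRow_transpose, ← updateRow_transpose, ← det_transpose A]
  exact detRowAlternating.map_update_rotate Aᵀ hij c s

noncomputable def bracketMatrix (ν a b c la lb lc ld θ : ℝ) : Matrix (Fin 5) (Fin 5) ℝ :=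
  !![sin θ, -cos θ, c, a, b;
     -sin θ, cos θ, c, b, a;
     12 * (ν - 1) * cos θ, 12 * (ν - 1) * sin θ, 0, 0, 0;
     -ν * la * sin θ, ν * la * cos θ, -ν * lb, -ν * lc, ν * ld;
     -ν * la * sin θ, ν * la * cos θ, -ν * lb, -ν * ld, ν * lc]

section bracketMatrix

variable (ν a b c la lb lc ld : ℝ)

theorem bracketMatrix_eq_rotate (θ : ℝ) :
    bracketMatrix ν a b c la lb lc ld θ =
      let A := bracketMatrix ν a b c la lb lc ld 0
      (A.updateCol 0 (cos θ • Aᵀ 0 - sin θ • Aᵀ 1)).updateCol 1 (sin θ • Aᵀ 0 + cos θ • Aᵀ 1) := by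
  ext i j
  fin_cases i <;> fin_cases j <;> simp [bracketMatrix] <;> ring

theorem det_bracketMatrix (θ : ℝ) :
    (bracketMatrix ν a b c la lb lc ld θ).det = (bracketMatrix ν a b c la lb lc ld 0).det := by
  rw [bracketMatrix_eq_rotate, det_updateCol_rotate _ Fin.zero_ne_one, cos_sq_add_sin_sq, one_mul]

end bracketMatrix

theorem stmt10_general (ν : ℝ)
    (a b c : ℝ)
    (la lb lc ld : ℝ)
    (L : ℝ → Matrix (Fin 5) (Fin 5) ℝ)
    (hL : L = fun θ₀ => (-ν) •
      !![sin θ₀, -cos θ₀, c, a, b;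
         -sin θ₀, cos θ₀, c, b, a;
         12 * (ν - 1) * cos θ₀, 12 * (ν - 1) * sin θ₀, 0, 0, 0;
         -ν * la * sin θ₀, ν * la * cos θ₀, -ν * lb, -ν * lc, ν * ld;
         -ν * la * sin θ₀, ν * la * cos θ₀, -ν * lb, -ν * ld, ν * lc]) :
    ∀ θ₀ θ₀' : ℝ, (L θ₀).det = (L θ₀').det := by
  have hdet (θ : ℝ) : (L θ).det = (-ν) ^ 5 * (bracketMatrix ν a b c la lb lc ld 0).det := by
    rw [hL, det_smul, Fintype.card_fin]
    exact congrArg _ (det_bracketMatrix ν a b c la lb lc ld θ)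
  intro θ₀ θ₀'
  rw [hdet, hdet]

/-- the determinant of the 5×5 bracket matrix L(θ₀, ν) of the
elastic microswimmer does not depend on the orientation θ₀. -/
theorem stmt10 (ν : ℝ)
    (a b c d : ℝ) (ha : a = -96/5) (hb : b = -66/5) (hc : c = 42/5) (hd : d = -24/5)
    (la lb lc ld : ℝ)
    (hla : la = (57/7) * c - (21/5) * a * ν - 54 * d * ν^2)
    (hlb : lb = -(18/5) * b + (3/2) * a * b * ν^2)
    (hlc : lc = -9 * a + (3/2) * a * b * ν + 3 * a * d * ν^2)
    (hld : ld = -(39/4) * c * d + 3 * a * d * ν + (183/4) * d^2 * ν^2)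
    (L : ℝ → Matrix (Fin 5) (Fin 5) ℝ)
    (hL : L = fun θ₀ => (-ν) •
      !![sin θ₀, -cos θ₀, c, a, b;
         -sin θ₀, cos θ₀, c, b, a;
         12 * (ν - 1) * cos θ₀, 12 * (ν - 1) * sin θ₀, 0, 0, 0;
         -ν * la * sin θ₀, ν * la * cos θ₀, -ν * lb, -ν * lc, ν * ld;
         -ν * la * sin θ₀, ν * la * cos θ₀, -ν * lb, -ν * ld, ν * lc]) :
    ∀ θ₀ θ₀' : ℝ, (L θ₀).det = (L θ₀').det :=
  stmt10_general ν a b c la lb lc ld L hL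
end
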